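/- Let k ≥ 2 be an integer. Every polynomial vector field v = (v₁, v₂) with components of total degree at most k+1 can be written as v = τ x^⊥ + a + b x, where τ is a symmetric polynomial matrix with entries of total degree at most k, a ∈ ℝ² and b ∈ ℝ; moreover a and b are uniquely determined by v, namely a = v(0,0) and b = ½(div v)(0,0) with div v := ∂₁v₁ + ∂₂v₂. -/

import Mathlib

open MvPolynomial Matrix

/-- Real polynomials in two variables. -/
abbrev P2 := MvPolynomial (Fin 2) ℝ

/-- The matrix `curl v` of a polynomial vector field, defined row-wise:
`(curl v)_{i1} = ∂₂ vᵢ`, `(curl v)_{i2} = -∂₁ vᵢ`. -/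
noncomputable def pcurl (v : Fin 2 → P2) : Matrix (Fin 2) (Fin 2) P2 :=
  Matrix.of fun i j =>
    if j = 0 then pderiv (1 : Fin 2) (v i) else -(pderiv (0 : Fin 2) (v i))

/-- `sym curl v := (curl v + (curl v)ᵀ)/2`. -/
noncomputable def psymCurl (v : Fin 2 → P2) : Matrix (Fin 2) (Fin 2) P2 :=
  (1 / 2 : ℝ) • (pcurl v + (pcurl v)ᵀ)

/-- `div div τ := Σ_{i,j} ∂ᵢ∂ⱼ τ_{ij}`. -/
noncomputable def pdivDiv (τ : Matrix (Fin 2) (Fin 2) P2) : P2 :=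
  ∑ i : Fin 2, ∑ j : Fin 2, pderiv i (pderiv j (τ i j))

/-- The matrix `x xᵀ q` with `(i,j)`-entry `Xᵢ · Xⱼ · q`. -/
noncomputable def xxT (q : P2) : Matrix (Fin 2) (Fin 2) P2 :=
  Matrix.of fun i j => X i * X j * q

/-- The polynomial vector `x^⊥ = (X₂, -X₁)`. -/
noncomputable def xPerp : Fin 2 → P2 := ![X 1, -X 0]

/-- `rot τ`, with components `(rot τ)ᵢ = ∂₁ τ_{i2} - ∂₂ τ_{i1}`. -/
noncomputable def prot (τ : Matrix (Fin 2) (Fin 2) P2) : Fin 2 → P2 :=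
  fun i => pderiv (0 : Fin 2) (τ i 1) - pderiv (1 : Fin 2) (τ i 0)

/-- The Hessian matrix `∇²q` with entries `∂ᵢ∂ⱼ q`. -/
noncomputable def phess (q : P2) : Matrix (Fin 2) (Fin 2) P2 :=
  Matrix.of fun i j => pderiv i (pderiv j q)

/-- `sym(x^⊥ ⊗ v)`, the symmetric matrix with `(i,j)`-entry
`((x^⊥)ᵢ vⱼ + vᵢ (x^⊥)ⱼ)/2`. -/
noncomputable def symTen (v : Fin 2 → P2) : Matrix (Fin 2) (Fin 2) P2 :=
  Matrix.of fun i j => (1 / 2 : ℝ) • (xPerp i * v j + v i * xPerp j)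

/-- The gradient matrix `∇v` with entries `(∇v)_{ij} = ∂ⱼ vᵢ`. -/
noncomputable def pgrad (v : Fin 2 → P2) : Matrix (Fin 2) (Fin 2) P2 :=
  Matrix.of fun i j => pderiv j (v i)

/-- The symmetric gradient `def v := (∇v + (∇v)ᵀ)/2`. -/
noncomputable def pdef (v : Fin 2 → P2) : Matrix (Fin 2) (Fin 2) P2 :=
  (1 / 2 : ℝ) • (pgrad v + (pgrad v)ᵀ)

/-- The matrix `x^⊥ (x^⊥)ᵀ q` with `(i,j)`-entry `(x^⊥)ᵢ (x^⊥)ⱼ q`. -/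
noncomputable def xPerpxPerpT (q : P2) : Matrix (Fin 2) (Fin 2) P2 :=
  Matrix.of fun i j => xPerp i * xPerp j * q

/-- `rot rot τ := ∂₁(rot τ)₂ − ∂₂(rot τ)₁`. -/
noncomputable def protRot (τ : Matrix (Fin 2) (Fin 2) P2) : P2 :=
  pderiv (0 : Fin 2) (prot τ 1) - pderiv (1 : Fin 2) (prot τ 0)

/-!
Subtracting `a + b x` with `a = v(0)` and `b = ½ (div v)(0)` leaves a field `w` with `w(0) = 0`
and `(div w)(0) = 0`. Since `w(0) = 0`, write `w₀ = X₀ α₀ + X₁ α₁` and `w₁ = X₀ γ₀ + X₁ γ₁`. The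
equations `τ x^⊥ = w` fix the entries of `τ` up to multiples of `X₀` and `X₁`, and the two
expressions for the off-diagonal entry agree once `α₀ + γ₁ = X₀ u₀ + X₁ u₁`; this is solvable
because `(α₀ + γ₁)(0) = (div w)(0) = 0`. Conversely `τ x^⊥` vanishes at `0` and, for symmetric
`τ`, so does its divergence, which makes `a` and `b` unique.
-/

namespace MvPolynomial

variable {σ R : Type*} [CommSemiring R]

theorem exists_monomial_eq_X_mul {n : ℕ} {m : σ →₀ ℕ} (hm : m ≠ 0)
    (hdeg : m.degree ≤ n + 1) (c : R) :
    ∃ i, ∃ q : MvPolynomial σ R, monomial m c = X i * q ∧ q.totalDegree ≤ n := by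
  obtain ⟨i, hi⟩ := Finsupp.ne_iff.mp hm
  have hle : Finsupp.single i 1 ≤ m := Finsupp.single_le_iff.mpr (Nat.one_le_iff_ne_zero.mpr hi)
  refine ⟨i, monomial (m - Finsupp.single i 1) c, ?_, ?_⟩
  · rw [X, monomial_mul, one_mul, add_tsub_cancel_of_le hle]
  · refine (totalDegree_monomial_le _ _).trans ?_
    have := congrArg Finsupp.degree (add_tsub_cancel_of_le hle)
    rw [map_add, Finsupp.degree_single] at this
    change Finsupp.degree _ ≤ n
    omega

theorem exists_eq_sum_X_mul_of_totalDegree_le [Fintype σ] [DecidableEq σ] {n : ℕ}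
    {p : MvPolynomial σ R} (hp : constantCoeff p = 0) (hdeg : p.totalDegree ≤ n + 1) :
    ∃ q : σ → MvPolynomial σ R, p = ∑ i, X i * q i ∧ ∀ i, (q i).totalDegree ≤ n := by
  rw [← support_sum_monomial_coeff p]
  refine Finset.sum_induction _ (fun p => ∃ q : σ → MvPolynomial σ R,
      p = ∑ i, X i * q i ∧ ∀ i, (q i).totalDegree ≤ n) ?_ ⟨0, by simp, by simp⟩ ?_
  · rintro _ _ ⟨q, rfl, hq⟩ ⟨q', rfl, hq'⟩
    refine ⟨q + q', by simp [mul_add, Finset.sum_add_distrib], fun i => ?_⟩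
    exact (totalDegree_add _ _).trans (max_le (hq i) (hq' i))
  · intro m hm
    have hm0 : m ≠ 0 := by
      rintro rfl
      exact mem_support_iff.mp hm (by rwa [← constantCoeff_eq])
    obtain ⟨i, q, hq, hqdeg⟩ :=
      exists_monomial_eq_X_mul hm0 ((le_totalDegree hm).trans hdeg) (coeff m p)
    refine ⟨Pi.single i q, by simp [hq, Pi.single_apply], fun j => ?_⟩
    rcases eq_or_ne j i with rfl | hj
    · simpa using hqdeg
    · simp [hj]

theorem eval_zero_pderiv_sum_X_mul [Fintype σ] [DecidableEq σ] (q : σ → MvPolynomial σ R)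
    (j : σ) : eval 0 (pderiv j (∑ i, X i * q i)) = eval 0 (q j) := by
  simp [Derivation.leibniz, pderiv_X, Pi.single_apply, apply_ite]

end MvPolynomial

noncomputable def pdiv (v : Fin 2 → P2) : P2 :=
  pderiv 0 (v 0) + pderiv 1 (v 1)

lemma eval_zero_mulVec_xPerp (τ : Matrix (Fin 2) (Fin 2) P2) (i : Fin 2) :
    eval 0 ((τ *ᵥ xPerp) i) = 0 := by
  fin_cases i <;> simp [mulVec, dotProduct, xPerp, Fin.sum_univ_two]

lemma eval_zero_pdiv_mulVec_xPerp {τ : Matrix (Fin 2) (Fin 2) P2} (hτ : τᵀ = τ) :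
    eval 0 (pdiv (τ *ᵥ xPerp)) = 0 := by
  have h10 : τ 1 0 = τ 0 1 := congrFun (congrFun hτ 0) 1
  simp [pdiv, mulVec, dotProduct, xPerp, Fin.sum_univ_two, Derivation.leibniz, pderiv_X, h10]

lemma eval_zero_of_eq_mulVec_xPerp_add {τ : Matrix (Fin 2) (Fin 2) P2} {v : Fin 2 → P2}
    {a : Fin 2 → ℝ} {b : ℝ} (hv : ∀ i, v i = (τ *ᵥ xPerp) i + C (a i) + C b * X i)
    (i : Fin 2) : eval 0 (v i) = a i := by
  rw [hv, map_add, map_add, eval_zero_mulVec_xPerp]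
  simp

lemma eval_zero_pdiv_of_eq_mulVec_xPerp_add {τ : Matrix (Fin 2) (Fin 2) P2} (hτ : τᵀ = τ)
    {v : Fin 2 → P2} {a : Fin 2 → ℝ} {b : ℝ}
    (hv : ∀ i, v i = (τ *ᵥ xPerp) i + C (a i) + C b * X i) :
    eval 0 (pdiv v) = 2 * b := by
  have hsplit : pdiv v = pdiv (τ *ᵥ xPerp) +
      (pderiv 0 (C (a 0) + C b * X 0) + pderiv 1 (C (a 1) + C b * X 1)) := by
    simp only [pdiv, hv, map_add]
    ring
  rw [hsplit, map_add, eval_zero_pdiv_mulVec_xPerp hτ]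
  simp [Derivation.leibniz]
  ring

lemma exists_symm_mulVec_xPerp_eq_of_eval_zero (n : ℕ) {w : Fin 2 → P2}
    (hw : ∀ i, eval 0 (w i) = 0) (hdiv : eval 0 (pdiv w) = 0)
    (hdeg : ∀ i, (w i).totalDegree ≤ n + 2) :
    ∃ τ : Matrix (Fin 2) (Fin 2) P2, τᵀ = τ ∧ (∀ i j, (τ i j).totalDegree ≤ n + 1) ∧
      τ *ᵥ xPerp = w := by
  obtain ⟨α, hα, hαdeg⟩ :=
    exists_eq_sum_X_mul_of_totalDegree_le (by rw [← eval_zero]; exact hw 0) (hdeg 0)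
  obtain ⟨γ, hγ, hγdeg⟩ :=
    exists_eq_sum_X_mul_of_totalDegree_le (by rw [← eval_zero]; exact hw 1) (hdeg 1)
  have hs : constantCoeff (α 0 + γ 1) = 0 := by
    rw [← eval_zero, map_add, ← eval_zero_pderiv_sum_X_mul α, ← eval_zero_pderiv_sum_X_mul γ,
      ← hα, ← hγ, ← map_add]
    exact hdiv
  obtain ⟨u, hu, hudeg⟩ := exists_eq_sum_X_mul_of_totalDegree_le hs
    ((totalDegree_add _ _).trans (max_le (hαdeg 0) (hγdeg 1)))
  simp only [Fin.sum_univ_two] at hα hγ hu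
  have hX : ∀ j (q : P2), q.totalDegree ≤ n → (X j * q).totalDegree ≤ n + 1 := fun j q hq =>
    (totalDegree_mul _ _).trans (by rw [totalDegree_X]; omega)
  refine ⟨!![α 1 + X 0 * u 1, γ 1 - X 0 * u 0; γ 1 - X 0 * u 0, -γ 0 - X 1 * u 0], ?_, ?_, ?_⟩
  · ext i j
    fin_cases i <;> fin_cases j <;> rfl
  · intro i j
    fin_cases i <;> fin_cases j
    · exact (totalDegree_add _ _).trans (max_le (hαdeg 1) (hX 0 _ (hudeg 1)))
    · exact (totalDegree_sub _ _).trans (max_le (hγdeg 1) (hX 0 _ (hudeg 0)))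
    · exact (totalDegree_sub _ _).trans (max_le (hγdeg 1) (hX 0 _ (hudeg 0)))
    · exact (totalDegree_sub _ _).trans
        (max_le ((totalDegree_neg _).trans_le (hγdeg 0)) (hX 1 _ (hudeg 0)))
  · funext i
    fin_cases i
    · simp [mulVec, dotProduct, xPerp, hα]
      linear_combination (-X 0 : P2) * hu
    · simp [mulVec, dotProduct, xPerp, hγ]
      ring

lemma exists_eq_symm_mulVec_xPerp_add (n : ℕ) {v : Fin 2 → P2}
    (hdeg : ∀ i, (v i).totalDegree ≤ n + 2) :
    ∃ τ : Matrix (Fin 2) (Fin 2) P2, τᵀ = τ ∧ (∀ i j, (τ i j).totalDegree ≤ n + 1) ∧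
      ∀ i, v i = (τ *ᵥ xPerp) i + C (eval 0 (v i)) + C (1 / 2 * eval 0 (pdiv v)) * X i := by
  set b : ℝ := 1 / 2 * eval 0 (pdiv v)
  obtain ⟨τ, hτ, hτdeg, hw⟩ := exists_symm_mulVec_xPerp_eq_of_eval_zero n
    (w := fun i => v i - C (eval 0 (v i)) - C b * X i) (by simp)
    (by simp [pdiv, Derivation.leibniz, b]; ring)
    (fun i => (totalDegree_sub _ _).trans <| max_le
      ((totalDegree_sub _ _).trans (max_le (hdeg i) (by simp)))
      ((totalDegree_mul _ _).trans (by simp)))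
  exact ⟨τ, hτ, hτdeg, fun i => by rw [hw]; ring⟩

/-- Decomposition `v = τ x^⊥ + a + b x` of polynomial vector fields of degree
≤ k+1, with `a = v(0,0)` and `b = ½ (div v)(0,0)` uniquely determined. -/
theorem stmt_11 (k : ℕ) (hk : 2 ≤ k) (v : Fin 2 → P2)
    (hdeg : ∀ i, (v i).totalDegree ≤ k + 1) :
    ∃ (τ : Matrix (Fin 2) (Fin 2) P2) (a : Fin 2 → ℝ) (b : ℝ),
      τᵀ = τ ∧ (∀ i j, (τ i j).totalDegree ≤ k) ∧
      (∀ i, v i = τ.mulVec xPerp i + C (a i) + C b * X i) ∧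
      (∀ i, a i = eval (0 : Fin 2 → ℝ) (v i)) ∧
      b = (1 / 2) * eval (0 : Fin 2 → ℝ)
        (pderiv (0 : Fin 2) (v 0) + pderiv (1 : Fin 2) (v 1)) ∧
      ∀ (τ' : Matrix (Fin 2) (Fin 2) P2) (a' : Fin 2 → ℝ) (b' : ℝ),
        τ'ᵀ = τ' → (∀ i j, (τ' i j).totalDegree ≤ k) →
        (∀ i, v i = τ'.mulVec xPerp i + C (a' i) + C b' * X i) →
        a' = a ∧ b' = b := by
  obtain ⟨n, rfl⟩ : ∃ n, k = n + 1 := ⟨k - 1, by omega⟩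
  obtain ⟨τ, hτ, hτdeg, hv⟩ := exists_eq_symm_mulVec_xPerp_add n hdeg
  refine ⟨τ, _, _, hτ, hτdeg, hv, fun _ => rfl, rfl, fun τ' a' b' hτ' _ hv' => ⟨?_, ?_⟩⟩
  · exact funext fun i => (eval_zero_of_eq_mulVec_xPerp_add hv' i).symm
  · have := eval_zero_pdiv_of_eq_mulVec_xPerp_add hτ' hv'
    linarith
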